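/- Fix σ ∈ ℂ. The data (U,Y) are informative for interpolation at σ (i.e., there exists a unique M0 ∈ ℂ with Σ_{U,Y} ⊆ Σ^0_{σ,M0}) if and only if both rank conditions hold: (a) rank [H_n(U), 0, γ_n(σ); H_n(Y), γ_n(σ), 0] = rank [H_n(U), 0; H_n(Y), γ_n(σ)], and (b) rank [H_n(U), 0; H_n(Y), γ_n(σ)] = rank [H_n(U); H_n(Y)] + 1. -/

import Mathlib

/-!
Write `C = [H_n(U); H_n(Y)]`, `u = (0, γ_n(σ))` and `v = (γ_n(σ), 0)`. The parameters `[q -p]`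
explain the data iff `w = (q, -p, -1)` is a left null vector of `C`, and then `Q(σ) = w ⬝ᵥ v` and
`P(σ) = -(w ⬝ᵥ u)`. These `w` form an affine hyperplane (last coordinate `-1`) of the real left
null space, so they span it, and since `C` is real they span the complex left null space `N` as
well. Informativity thus says that there is a unique `M₀` with `w ⬝ᵥ v = -M₀ (w ⬝ᵥ u)` on `N`,
i.e. that `w ⬝ᵥ u` does not vanish on `N` and its kernel is contained in that of `w ⬝ᵥ v`. Since
the column space of a matrix is the annihilator of its left null space, the first condition is
`u ∉ colspan C`, which is (b), and the second is `v ∈ colspan [C u]`, which is (a).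
-/

open Matrix

/-- Hankel matrix of depth `n` built from data `W = (w_0, …, w_T)`. -/
def hankel (n T : ℕ) (h : n ≤ T) (W : Fin (T + 1) → ℝ) :
    Matrix (Fin (n + 1)) (Fin (T - n + 1)) ℝ :=
  Matrix.of fun i j => W ⟨i.1 + j.1, by omega⟩

/-- The order-`n` system with parameters `[q  -p]` explains the data `(U, Y)`. -/
def Explains (n T : ℕ) (h : n ≤ T) (U Y : Fin (T + 1) → ℝ)
    (q : Fin (n + 1) → ℝ) (p : Fin n → ℝ) : Prop :=
  ∀ j : Fin (T - n + 1),
    ∑ i : Fin (n + 1), q i * U ⟨i.1 + j.1, by omega⟩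
      - ∑ i : Fin n, p i * Y ⟨i.1 + j.1, by omega⟩ = Y ⟨n + j.1, by omega⟩

open Module Submodule

section LinearAlgebra

variable {K V : Type*} [Field K] [AddCommGroup V] [Module K V]

theorem Submodule.finrank_span_insert_of_notMem [FiniteDimensional K V] {s : Set V} {x : V}
    (hx : x ∉ span K s) : finrank K (span K (insert x s)) = finrank K (span K s) + 1 := by
  have hx₀ : x ≠ 0 := fun h => hx (h ▸ zero_mem _)
  have hinf : span K s ⊓ K ∙ x = ⊥ :=
    disjoint_iff.mp ((disjoint_span_singleton' hx₀).mpr hx)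
  have := finrank_sup_add_finrank_inf_eq (span K s) (K ∙ x)
  rw [hinf, finrank_bot, add_zero, finrank_span_singleton hx₀] at this
  rw [span_insert, sup_comm, this]

theorem Submodule.finrank_span_insert_eq_iff [FiniteDimensional K V] {s : Set V} {x : V} :
    finrank K (span K (insert x s)) = finrank K (span K s) ↔ x ∈ span K s := by
  refine ⟨fun h => ?_, fun h => by rw [span_insert_eq_span h]⟩
  by_contra hx
  rw [finrank_span_insert_of_notMem hx] at h
  omega

theorem Submodule.finrank_span_insert_eq_add_one_iff [FiniteDimensional K V] {s : Set V}
    {x : V} : finrank K (span K (insert x s)) = finrank K (span K s) + 1 ↔ x ∉ span K s := by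
  refine ⟨fun h hx => ?_, finrank_span_insert_of_notMem⟩
  rw [span_insert_eq_span hx] at h
  omega

theorem Submodule.le_span_setOf_mem_and_apply_eq (N : Submodule K V) (φ : V →ₗ[K] K) {w₀ : V}
    {c : K} (hw₀ : w₀ ∈ N) (hφ : φ w₀ = c) (hc : c ≠ 0) : N ≤ span K {w | w ∈ N ∧ φ w = c} := by
  intro w hw
  set t := 1 - φ w / c
  have hmem {x : V} (hx : x ∈ N) (h : φ x = c) : x ∈ span K {w | w ∈ N ∧ φ w = c} :=
    subset_span ⟨hx, h⟩
  have h₁ := hmem (add_mem hw (smul_mem _ t hw₀)) (by simp [t, hφ]; field_simp; ring)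
  simpa using sub_mem h₁ (smul_mem _ t (hmem hw₀ hφ))

theorem existsUnique_forall_eq_mul_iff (N : Submodule K V) (F G : V →ₗ[K] K) :
    (∃! M : K, ∀ w ∈ N, F w = M * G w) ↔
      (∀ w ∈ N, G w = 0 → F w = 0) ∧ ∃ w ∈ N, G w ≠ 0 := by
  constructor
  · rintro ⟨M, hM, huniq⟩
    refine ⟨fun w hw hG => by rw [hM w hw, hG, mul_zero], ?_⟩
    by_contra! hG
    simpa using huniq (M + 1) fun w hw => by rw [hM w hw, hG w hw, mul_zero, mul_zero]
  · rintro ⟨hker, w₀, hw₀, hG₀⟩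
    refine ⟨F w₀ / G w₀, fun w hw => ?_, fun M hM => by rw [hM w₀ hw₀]; field_simp⟩
    have := hker (G w₀ • w - G w • w₀) (sub_mem (smul_mem _ _ hw) (smul_mem _ _ hw₀))
      (by simp only [map_sub, map_smul, smul_eq_mul]; ring)
    simp only [map_sub, map_smul, smul_eq_mul] at this
    field_simp
    linear_combination this

end LinearAlgebra

namespace Matrix

variable {K m k : Type*} [Field K] [Fintype m]

theorem mem_span_iff_forall_dotProduct_eq_zero {s : Set (m → K)} {x : m → K} :
    x ∈ span K s ↔ ∀ w : m → K, (∀ y ∈ s, w ⬝ᵥ y = 0) → w ⬝ᵥ x = 0 := by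
  classical
  have hann (φ : Dual K (m → K)) : φ ∈ (span K s).dualAnnihilator ↔ ∀ y ∈ s, φ y = 0 := by
    rw [← SetLike.mem_coe, coe_dualAnnihilator_span]
    rfl
  rw [← Subspace.forall_mem_dualAnnihilator_apply_eq_zero_iff]
  simp only [hann]
  exact ⟨fun h w => h (dotProductEquiv K m w),
    fun h φ => by
      simpa only [← dotProductEquiv_apply_apply, LinearEquiv.apply_symm_apply] using
        h ((dotProductEquiv K m).symm φ)⟩

theorem vecMul_eq_zero_iff_forall_dotProduct_col (C : Matrix m k K) (w : m → K) :
    w ᵥ* C = 0 ↔ ∀ j, w ⬝ᵥ C.col j = 0 :=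
  funext_iff

theorem mem_span_range_col_iff (C : Matrix m k K) (x : m → K) :
    x ∈ span K (Set.range C.col) ↔ ∀ w, w ᵥ* C = 0 → w ⬝ᵥ x = 0 := by
  simp only [mem_span_iff_forall_dotProduct_eq_zero, Set.forall_mem_range,
    vecMul_eq_zero_iff_forall_dotProduct_col]

theorem mem_span_insert_range_col_iff (C : Matrix m k K) (x y : m → K) :
    x ∈ span K (insert y (Set.range C.col)) ↔ ∀ w, w ᵥ* C = 0 → w ⬝ᵥ y = 0 → w ⬝ᵥ x = 0 := by
  simp only [mem_span_iff_forall_dotProduct_eq_zero, Set.forall_mem_insert, Set.forall_mem_range,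
    vecMul_eq_zero_iff_forall_dotProduct_col]
  exact forall_congr' fun w => ⟨fun h hC hy => h ⟨hy, hC⟩, fun h ⟨hy, hC⟩ => h hC hy⟩

theorem range_col_fromCols {α m n₁ n₂ : Type*} (M : Matrix m n₁ α) (N : Matrix m n₂ α) :
    Set.range (fromCols M N).col = Set.range M.col ∪ Set.range N.col := by
  rw [← Set.Sum.elim_range]
  congr 1
  funext j
  rcases j with j | j <;> rfl

variable {α m₁ m₂ n : Type*} [Zero α] (A₁ : Matrix m₁ n α) (A₂ : Matrix m₂ n α)

theorem range_col_fromBlocks_zero_col (x : m₂ → α) :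
    Set.range (fromBlocks A₁ 0 A₂ (of fun i (_ : Fin 1) => x i)).col =
      insert (Sum.elim (0 : m₁ → α) x) (Set.range (fromRows A₁ A₂).col) := by
  have hcol : Set.range (fromRows (0 : Matrix m₁ (Fin 1) α) (of fun i (_ : Fin 1) => x i)).col =
      {Sum.elim (0 : m₁ → α) x} := by
    rw [Set.range_unique]
    congr
    funext i
    rcases i with i | i <;> rfl
  rw [← fromCols_fromRows_eq_fromBlocks, range_col_fromCols, hcol, Set.union_singleton]

theorem range_col_fromBlocks_pair (x : m₁ → α) (y : m₂ → α) :
    Set.range (fromBlocks A₁ (of fun i (j : Fin 2) => if j = 0 then 0 else x i)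
        A₂ (of fun i (j : Fin 2) => if j = 0 then y i else 0)).col =
      insert (Sum.elim x 0)
        (insert (Sum.elim (0 : m₁ → α) y) (Set.range (fromRows A₁ A₂).col)) := by
  set X := fromRows (of fun i (j : Fin 2) => if j = 0 then 0 else x i)
    (of fun i (j : Fin 2) => if j = 0 then y i else 0)
  have h₀ : X.col 0 = Sum.elim (0 : m₁ → α) y := by funext i; rcases i with i | i <;> rfl
  have h₁ : X.col 1 = Sum.elim x 0 := by funext i; rcases i with i | i <;> rfl
  have hcol : Set.range X.col = {Sum.elim (0 : m₁ → α) y, Sum.elim x 0} := by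
    ext z
    simp only [Set.mem_range, Fin.exists_fin_two, h₀, h₁, Set.mem_insert_iff,
      Set.mem_singleton_iff, eq_comm]
  rw [← fromCols_fromRows_eq_fromBlocks, range_col_fromCols, hcol, Set.union_insert,
    Set.union_singleton, Set.insert_comm]

theorem ker_vecMulLinear_map_ofReal_le_span {m k : Type*} [Fintype m] (H : Matrix m k ℝ)
    {A : Set (m → ℝ)} (hA : LinearMap.ker H.vecMulLinear ≤ span ℝ A) :
    LinearMap.ker (H.map Complex.ofReal).vecMulLinear ≤
      span ℂ ((fun w i => (w i : ℂ)) '' A) := by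
  intro w hw
  let ι : (m → ℝ) →ₗ[ℝ] m → ℂ := Complex.ofRealCLM.toLinearMap.compLeft m
  have hι {r : m → ℝ} (hr : r ᵥ* H = 0) : ι r ∈ span ℂ (ι '' A) :=
    span_le_restrictScalars ℝ ℂ _ (span_image ι ▸ mem_map_of_mem (hA hr))
  rw [LinearMap.mem_ker, vecMulLinear_apply] at hw
  have hre : (fun i => (w i).re) ᵥ* H = 0 := by
    ext j
    simpa [vecMul, dotProduct, Complex.re_sum] using congrArg Complex.re (congrFun hw j)
  have him : (fun i => (w i).im) ᵥ* H = 0 := by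
    ext j
    simpa [vecMul, dotProduct, Complex.im_sum] using congrArg Complex.im (congrFun hw j)
  have hw_eq : w = ι (fun i => (w i).re) + Complex.I • ι (fun i => (w i).im) := by
    ext i
    simp [ι, mul_comm Complex.I, Complex.re_add_im]
  rw [hw_eq]
  exact add_mem (hι hre) (smul_mem _ _ (hι him))

end Matrix

section Interpolation

variable {n T : ℕ} (hT : n ≤ T) (U Y : Fin (T + 1) → ℝ)

def paramVec (q : Fin (n + 1) → ℝ) (p : Fin n → ℝ) : Fin (n + 1) ⊕ Fin (n + 1) → ℝ :=
  Sum.elim q (-Fin.snoc p 1)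

theorem explains_iff_paramVec_vecMul_eq_zero {q : Fin (n + 1) → ℝ} {p : Fin n → ℝ} :
    Explains n T hT U Y q p ↔
      paramVec q p ᵥ* fromRows (hankel n T hT U) (hankel n T hT Y) = 0 := by
  rw [paramVec, sumElim_vecMul_fromRows, funext_iff]
  refine forall_congr' fun j => ?_
  simp only [Fin.sum_univ_castSucc, Fin.val_castSucc, Fin.val_last, hankel, Pi.add_apply, vecMul,
    dotProduct, of_apply, Pi.neg_apply, neg_mul, Finset.sum_neg_distrib, Fin.snoc_castSucc,
    Fin.snoc_last, one_mul, neg_add_rev, Pi.zero_apply]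
  constructor <;> intro h <;> linarith

theorem exists_paramVec_eq {w : Fin (n + 1) ⊕ Fin (n + 1) → ℝ}
    (hw : w (Sum.inr (Fin.last n)) = -1) : ∃ q p, paramVec q p = w := by
  refine ⟨w ∘ Sum.inl, fun i => -w (Sum.inr i.castSucc), funext fun i => ?_⟩
  rcases i with i | i
  · rfl
  · refine Fin.lastCases ?_ (fun i => ?_) i <;> simp [paramVec, hw]

theorem ker_vecMulLinear_map_ofReal_le_span_paramVec (hne : ∃ q p, Explains n T hT U Y q p) :
    LinearMap.ker ((fromRows (hankel n T hT U) (hankel n T hT Y)).map Complex.ofReal).vecMulLinear ≤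
      span ℂ {w | ∃ q p, Explains n T hT U Y q p ∧ w = fun i => (paramVec q p i : ℂ)} := by
  obtain ⟨q₀, p₀, h₀⟩ := hne
  refine (ker_vecMulLinear_map_ofReal_le_span _ <|
    le_span_setOf_mem_and_apply_eq _ (LinearMap.proj (Sum.inr (Fin.last n)))
      ((explains_iff_paramVec_vecMul_eq_zero hT U Y).mp h₀) (c := -1) (by simp [paramVec])
      (by norm_num)).trans (span_mono ?_)
  rintro _ ⟨w, ⟨hw, hlast⟩, rfl⟩
  obtain ⟨q, p, rfl⟩ := exists_paramVec_eq hlast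
  exact ⟨q, p, (explains_iff_paramVec_vecMul_eq_zero hT U Y).mpr hw, rfl⟩

theorem ofReal_paramVec_dotProduct_sumElim_monomials_zero (σ : ℂ) (q : Fin (n + 1) → ℝ)
    (p : Fin n → ℝ) :
    (fun i => (paramVec q p i : ℂ)) ⬝ᵥ Sum.elim (fun i : Fin (n + 1) => σ ^ (i : ℕ)) 0 =
      ∑ i, (q i : ℂ) * σ ^ (i : ℕ) := by
  simp [paramVec, dotProduct]

theorem ofReal_paramVec_dotProduct_sumElim_zero_monomials (σ : ℂ) (q : Fin (n + 1) → ℝ)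
    (p : Fin n → ℝ) :
    (fun i => (paramVec q p i : ℂ)) ⬝ᵥ Sum.elim 0 (fun i : Fin (n + 1) => σ ^ (i : ℕ)) =
      -(σ ^ n + ∑ i : Fin n, (p i : ℂ) * σ ^ (i : ℕ)) := by
  simp [paramVec, dotProduct, Fin.sum_univ_castSucc]
  ring

theorem forall_explains_iff_forall_vecMul_eq_zero (hne : ∃ q p, Explains n T hT U Y q p)
    (σ M : ℂ) :
    (∀ (q : Fin (n + 1) → ℝ) (p : Fin n → ℝ), Explains n T hT U Y q p →
        ∑ i : Fin (n + 1), (q i : ℂ) * σ ^ (i : ℕ)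
          = M * (σ ^ n + ∑ i : Fin n, (p i : ℂ) * σ ^ (i : ℕ))) ↔
      ∀ w, w ᵥ* fromRows ((hankel n T hT U).map Complex.ofReal)
          ((hankel n T hT Y).map Complex.ofReal) = 0 →
        w ⬝ᵥ Sum.elim (fun i : Fin (n + 1) => σ ^ (i : ℕ)) 0 =
          M * -(w ⬝ᵥ Sum.elim 0 fun i : Fin (n + 1) => σ ^ (i : ℕ)) := by
  set H := fromRows (hankel n T hT U) (hankel n T hT Y)
  set u : Fin (n + 1) ⊕ Fin (n + 1) → ℂ := Sum.elim 0 fun i => σ ^ (i : ℕ)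
  set v : Fin (n + 1) ⊕ Fin (n + 1) → ℂ := Sum.elim (fun i => σ ^ (i : ℕ)) 0
  rw [← fromRows_map]
  constructor
  · intro h w hw
    let L := (dotProductBilin ℂ ℂ).flip v + M • (dotProductBilin ℂ ℂ).flip u
    have hL : w ⬝ᵥ v + M * (w ⬝ᵥ u) = 0 := by
      refine (span_le (p := LinearMap.ker L)).mpr ?_
        (ker_vecMulLinear_map_ofReal_le_span_paramVec hT U Y hne hw)
      rintro _ ⟨q, p, hqp, rfl⟩
      have := h q p hqp
      rw [← ofReal_paramVec_dotProduct_sumElim_monomials_zero, ← neg_neg (σ ^ n + _),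
        ← ofReal_paramVec_dotProduct_sumElim_zero_monomials] at this
      change _ ⬝ᵥ v + M * (_ ⬝ᵥ u) = 0
      linear_combination this
    linear_combination hL
  · intro h q p hqp
    have hw : (fun i => (paramVec q p i : ℂ)) ᵥ* H.map Complex.ofReal = 0 := by
      funext j
      have := RingHom.map_vecMul Complex.ofRealHom H (paramVec q p) j
      rw [(explains_iff_paramVec_vecMul_eq_zero hT U Y).mp hqp] at this
      exact this.symm
    have := h _ hw
    rwa [ofReal_paramVec_dotProduct_sumElim_monomials_zero,
      ofReal_paramVec_dotProduct_sumElim_zero_monomials, neg_neg] at this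

end Interpolation

theorem stmt_6 (n T : ℕ) (hT : n ≤ T) (U Y : Fin (T + 1) → ℝ) (σ : ℂ)
    (hne : ∃ (q : Fin (n + 1) → ℝ) (p : Fin n → ℝ), Explains n T hT U Y q p) :
    (∃! M0 : ℂ, ∀ (q : Fin (n + 1) → ℝ) (p : Fin n → ℝ), Explains n T hT U Y q p →
        ∑ i : Fin (n + 1), (q i : ℂ) * σ ^ (i : ℕ)
          = M0 * (σ ^ n + ∑ i : Fin n, (p i : ℂ) * σ ^ (i : ℕ))) ↔
      ((Matrix.fromBlocks
            ((hankel n T hT U).map (Complex.ofReal : ℝ → ℂ))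
            (Matrix.of fun (i : Fin (n + 1)) (j : Fin 2) =>
              if j = 0 then 0 else σ ^ (i : ℕ))
            ((hankel n T hT Y).map (Complex.ofReal : ℝ → ℂ))
            (Matrix.of fun (i : Fin (n + 1)) (j : Fin 2) =>
              if j = 0 then σ ^ (i : ℕ) else 0)).rank
          = (Matrix.fromBlocks
            ((hankel n T hT U).map (Complex.ofReal : ℝ → ℂ))
            (0 : Matrix (Fin (n + 1)) (Fin 1) ℂ)
            ((hankel n T hT Y).map (Complex.ofReal : ℝ → ℂ))
            (Matrix.of fun (i : Fin (n + 1)) (_ : Fin 1) => σ ^ (i : ℕ))).rank) ∧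
      ((Matrix.fromBlocks
            ((hankel n T hT U).map (Complex.ofReal : ℝ → ℂ))
            (0 : Matrix (Fin (n + 1)) (Fin 1) ℂ)
            ((hankel n T hT Y).map (Complex.ofReal : ℝ → ℂ))
            (Matrix.of fun (i : Fin (n + 1)) (_ : Fin 1) => σ ^ (i : ℕ))).rank
          = (Matrix.fromRows
            ((hankel n T hT U).map (Complex.ofReal : ℝ → ℂ))
            ((hankel n T hT Y).map (Complex.ofReal : ℝ → ℂ))).rank + 1) := by
  set C := fromRows ((hankel n T hT U).map Complex.ofReal) ((hankel n T hT Y).map Complex.ofReal)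
  set u : Fin (n + 1) ⊕ Fin (n + 1) → ℂ := Sum.elim 0 fun i => σ ^ (i : ℕ)
  set v : Fin (n + 1) ⊕ Fin (n + 1) → ℂ := Sum.elim (fun i => σ ^ (i : ℕ)) 0
  rw [rank_eq_finrank_span_cols, rank_eq_finrank_span_cols, rank_eq_finrank_span_cols,
    range_col_fromBlocks_pair, range_col_fromBlocks_zero_col,
    finrank_span_insert_eq_iff, finrank_span_insert_eq_add_one_iff,
    mem_span_insert_range_col_iff, mem_span_range_col_iff,
    existsUnique_congr (forall_explains_iff_forall_vecMul_eq_zero hT U Y hne σ)]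
  simpa only [LinearMap.mem_ker, LinearMap.flip_apply, vecMulBilin_apply,
    dotProductBilin_apply_apply, LinearMap.neg_apply, neg_eq_zero, not_forall, ne_eq,
    exists_prop] using
    existsUnique_forall_eq_mul_iff (LinearMap.ker C.vecMulLinear)
    ((dotProductBilin ℂ ℂ).flip v) (-(dotProductBilin ℂ ℂ).flip u)
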